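/- Let f be analytic on the open unit disk with |f(z)| < 1 there, f(z) = ∑ aₙ zⁿ, and let m ≥ 1 be an integer. If r ∈ [0,1) satisfies 3r - 1 + rᵐ(2r²(rᵐ + 2) + rᵐ(1 - r)) ≤ 0, then for all z with |z| = r, |f(zᵐ)| + |z| |f'(zᵐ)| + ∑_{k≥2} |aₖ| rᵏ ≤ 1. -/

import Mathlib

/-!
Write `A = ‖f 0‖` and `ρ = rᵐ = ‖zᵐ‖`. The Schwarz–Pick lemma at `w = zᵐ` gives
`‖f w‖ ≤ (A + ρ) / (1 + A ρ)` and `‖f' w‖ ≤ (1 - ‖f w‖²) / (1 - ρ²)`, and Wiener's inequality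
`‖aₖ‖ ≤ 1 - A²` (`k ≥ 1`) bounds the tail `∑_{k ≥ 2} ‖aₖ‖ rᵏ` by `(1 - A²) r² / (1 - r)`.

Wiener's inequality comes from averaging `f` over the `k`-th roots of unity: this keeps `f 0` and
`aₖ` but kills the coefficients of order `1, …, k - 1`, so the Möbius transform of the average
vanishes to order `k` at `0`, and Cauchy's estimate for its `k`-th coefficient is the bound. For
`k = 1` this is the Schwarz–Pick derivative bound at `0`, which a disc automorphism moves to `w`.

Since `2 r ≤ 1 - ρ²`, the bound for `‖f w‖ + r ‖f' w‖` increases with `‖f w‖`, so the sum is at most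
`(A + ρ) / (1 + A ρ) + r (1 - A²) / (1 + A ρ)² + (1 - A²) r² / (1 - r)`, and the hypothesis on `r`
(together with `ρ ≤ r`) makes this at most `1` for every `A ∈ [0, 1)`.
-/

open Complex Metric Set Filter Topology
open scoped ComplexConjugate Nat

lemma Complex.norm_iteratedDeriv_le_of_forall_mem_ball_norm_le {E : Type*} [NormedAddCommGroup E]
    [NormedSpace ℂ E] [CompleteSpace E] {f : ℂ → E} {c : ℂ} {R M : ℝ} (n : ℕ) (hR : 0 < R)
    (hd : DifferentiableOn ℂ f (ball c R)) (hM : ∀ z ∈ ball c R, ‖f z‖ ≤ M) :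
    ‖iteratedDeriv n f c‖ ≤ n ! * M / R ^ n := by
  rw [le_div_iff₀ (pow_pos hR n)]
  have hlim : Tendsto (fun ρ => ‖iteratedDeriv n f c‖ * ρ ^ n) (𝓝[<] R)
      (𝓝 (‖iteratedDeriv n f c‖ * R ^ n)) :=
    ((continuous_const.mul (continuous_pow n)).tendsto R).mono_left nhdsWithin_le_nhds
  refine le_of_tendsto hlim ?_
  filter_upwards [Ioo_mem_nhdsLT hR] with ρ hρ
  have hcl : closedBall c ρ ⊆ ball c R := closedBall_subset_ball hρ.2
  have := norm_iteratedDeriv_le_of_forall_mem_sphere_norm_le n hρ.1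
    ((hd.mono hcl).diffContOnCl_ball subset_rfl) fun z hz =>
      hM z (hcl (sphere_subset_closedBall hz))
  rwa [le_div_iff₀ (pow_pos hρ.1 n)] at this

lemma iteratedDeriv_mul_of_forall_lt_eq_zero {𝕜 𝔸 : Type*} [NontriviallyNormedField 𝕜]
    [NormedRing 𝔸] [NormedAlgebra 𝕜 𝔸] {f g : 𝕜 → 𝔸} {x : 𝕜} {n : ℕ}
    (hf : ContDiffAt 𝕜 n f x) (hg : ContDiffAt 𝕜 n g x) (h : ∀ i < n, iteratedDeriv i f x = 0) :
    iteratedDeriv n (f * g) x = iteratedDeriv n f x * g x := by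
  rw [iteratedDeriv_mul hf hg, Finset.sum_range_succ, Finset.sum_eq_zero fun i hi => by
    rw [h i (Finset.mem_range.1 hi), mul_zero, zero_mul]]
  simp

lemma mapsTo_const_mul_ball {c : ℂ} (hc : ‖c‖ ≤ 1) (R : ℝ) :
    MapsTo (c * ·) (ball (0 : ℂ) R) (ball 0 R) := fun z hz => by
  rw [mem_ball_zero_iff] at hz
  rw [mem_ball_zero_iff, norm_mul]
  exact (mul_le_of_le_one_left (norm_nonneg z) hc).trans_lt hz

lemma iteratedDeriv_comp_const_mul_zero {E : Type*} [NormedAddCommGroup E] [NormedSpace ℂ E]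
    [CompleteSpace E] {f : ℂ → E} {R : ℝ} (hR : 0 < R)
    (hd : DifferentiableOn ℂ f (ball 0 R)) {c : ℂ} (hc : ‖c‖ ≤ 1) (n : ℕ) :
    iteratedDeriv n (fun z => f (c * z)) 0 = c ^ n • iteratedDeriv n f 0 := by
  have h0 : (0 : ℂ) ∈ ball 0 R := mem_ball_self hR
  have := iteratedDerivWithin_comp_const_smul h0 isOpen_ball.uniqueDiffOn
    (hd.contDiffOn (n := n) isOpen_ball) c (mapsTo_const_mul_ball hc R)
  rwa [mul_zero, iteratedDerivWithin_of_isOpen isOpen_ball h0,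
    iteratedDerivWithin_of_isOpen isOpen_ball h0] at this

lemma IsPrimitiveRoot.sum_pow_mul_eq_ite {R : Type*} [CommRing R] [IsDomain R] {ω : R} {k : ℕ}
    (hω : IsPrimitiveRoot ω k) (n : ℕ) :
    ∑ j ∈ Finset.range k, ω ^ (j * n) = if k ∣ n then (k : R) else 0 := by
  simp_rw [mul_comm _ n, pow_mul]
  split_ifs with hkn
  · simp [(hω.pow_eq_one_iff_dvd n).2 hkn]
  · have hne : ω ^ n - 1 ≠ 0 := sub_ne_zero.2 fun h => hkn ((hω.pow_eq_one_iff_dvd n).1 h)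
    have := geom_sum_mul (ω ^ n) k
    rw [pow_right_comm, hω.pow_eq_one, one_pow, sub_self] at this
    exact (mul_eq_zero.1 this).resolve_right hne

noncomputable def mobius (a z : ℂ) : ℂ := (a - z) / (1 - conj a * z)

@[simp] lemma mobius_self (a : ℂ) : mobius a a = 0 := by simp [mobius]

@[simp] lemma mobius_zero_right (a : ℂ) : mobius a 0 = a := by simp [mobius]

lemma one_sub_conj_mul_ne_zero {a z : ℂ} (ha : ‖a‖ < 1) (hz : ‖z‖ ≤ 1) : 1 - conj a * z ≠ 0 := by
  refine sub_ne_zero.2 fun h => ?_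
  have : ‖conj a * z‖ < 1 := by
    rw [norm_mul, RCLike.norm_conj]
    exact (mul_le_of_le_one_right (norm_nonneg a) hz).trans_lt ha
  simp [← h] at this

lemma normSq_one_sub_conj_mul_sub_normSq_sub (a z : ℂ) :
    normSq (1 - conj a * z) - normSq (a - z) = (1 - normSq a) * (1 - normSq z) := by
  simp only [normSq_apply, sub_re, sub_im, one_re, one_im, mul_re, mul_im, conj_re, conj_im]
  ring

lemma norm_mobius_lt_one {a z : ℂ} (ha : ‖a‖ < 1) (hz : ‖z‖ < 1) : ‖mobius a z‖ < 1 := by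
  have hden := one_sub_conj_mul_ne_zero ha hz.le
  rw [mobius, norm_div, div_lt_one (norm_pos_iff.2 hden),
    ← sq_lt_sq₀ (norm_nonneg _) (norm_nonneg _), ← normSq_eq_norm_sq, ← normSq_eq_norm_sq,
    ← sub_pos, normSq_one_sub_conj_mul_sub_normSq_sub, normSq_eq_norm_sq, normSq_eq_norm_sq]
  exact mul_pos (by nlinarith [norm_nonneg a]) (by nlinarith [norm_nonneg z])

lemma mapsTo_mobius {a : ℂ} (ha : ‖a‖ < 1) : MapsTo (mobius a) (ball 0 1) (ball 0 1) := by
  intro z hz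
  rw [mem_ball_zero_iff] at hz ⊢
  exact norm_mobius_lt_one ha hz

lemma differentiableOn_mobius {a : ℂ} (ha : ‖a‖ < 1) :
    DifferentiableOn ℂ (mobius a) (ball 0 1) :=
  fun z hz => by
    refine (((differentiableAt_const a).sub differentiableAt_id).div ?_ ?_).differentiableWithinAt
    · fun_prop
    · exact one_sub_conj_mul_ne_zero ha (mem_ball_zero_iff.1 hz).le

lemma hasDerivAt_mobius_zero (a : ℂ) : HasDerivAt (mobius a) (‖a‖ ^ 2 - 1 : ℝ) 0 := by
  have h := ((hasDerivAt_id' (0 : ℂ)).const_sub a).fun_div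
    (((hasDerivAt_id' (0 : ℂ)).const_mul (conj a)).const_sub 1) (by simp)
  refine h.congr_deriv ?_
  push_cast
  rw [← mul_conj']
  ring

lemma abs_norm_sub_norm_le_norm_mobius_mul {a b : ℂ} (ha : ‖a‖ < 1) (hb : ‖b‖ < 1) :
    |‖b‖ - ‖a‖| ≤ ‖mobius a b‖ * (1 - ‖a‖ * ‖b‖) := by
  have hD := norm_pos_iff.2 (one_sub_conj_mul_ne_zero ha hb.le)
  have hid := normSq_one_sub_conj_mul_sub_normSq_sub a b
  simp only [normSq_eq_norm_sq] at hid
  have hN : |‖b‖ - ‖a‖| ^ 2 ≤ ‖a - b‖ ^ 2 := by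
    rw [norm_sub_rev]
    exact pow_le_pow_left₀ (abs_nonneg _) (abs_norm_sub_norm_le b a) 2
  have hK : 0 ≤ (1 - ‖a‖ ^ 2) * (1 - ‖b‖ ^ 2) :=
    mul_nonneg (by nlinarith [norm_nonneg a]) (by nlinarith [norm_nonneg b])
  have hab : 0 ≤ 1 - ‖a‖ * ‖b‖ := by nlinarith [norm_nonneg a, norm_nonneg b]
  rw [mobius, norm_div, div_mul_eq_mul_div, le_div_iff₀ hD]
  refine (pow_le_pow_iff_left₀ (by positivity) (mul_nonneg (norm_nonneg _) hab) two_ne_zero).1 ?_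
  rw [mul_pow, mul_pow, sq_abs]
  rw [sq_abs] at hN
  nlinarith [mul_nonneg hK (sub_nonneg.2 hN)]

theorem norm_iteratedDeriv_le_of_iteratedDeriv_eq_zero {f : ℂ → ℂ}
    (hd : DifferentiableOn ℂ f (ball 0 1)) (hf : MapsTo f (ball 0 1) (ball 0 1)) {k : ℕ}
    (hk : 0 < k) (hvan : ∀ i, 0 < i → i < k → iteratedDeriv i f 0 = 0) :
    ‖iteratedDeriv k f 0‖ ≤ k ! * (1 - ‖f 0‖ ^ 2) := by
  set a := f 0
  have h0 : (0 : ℂ) ∈ ball 0 1 := mem_ball_self one_pos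
  have ha : ‖a‖ < 1 := mem_ball_zero_iff.1 (hf h0)
  have hA : 0 < 1 - ‖a‖ ^ 2 := by nlinarith [norm_nonneg a]
  have hcd : ∀ g : ℂ → ℂ, DifferentiableOn ℂ g (ball 0 1) → ContDiffAt ℂ k g 0 :=
    fun _ hg => (hg.contDiffOn isOpen_ball).contDiffAt (isOpen_ball.mem_nhds h0)
  set u : ℂ → ℂ := fun z => (1 - conj a * f z)⁻¹
  have hud : DifferentiableOn ℂ u (ball 0 1) :=
    ((differentiableOn_const 1).sub ((differentiableOn_const _).mul hd)).inv fun z hz =>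
      one_sub_conj_mul_ne_zero ha (mem_ball_zero_iff.1 (hf hz)).le
  have hΦ : mobius a ∘ f = (fun z => a - f z) * u := by
    funext z; simp [mobius, div_eq_mul_inv, u]
  have hlow : ∀ i < k, iteratedDeriv i (fun z => a - f z) 0 = 0 := by
    intro i hi
    rcases Nat.eq_zero_or_pos i with rfl | hi0
    · simp [a]
    · rw [iteratedDeriv_const_sub hi0, iteratedDeriv_neg, hvan i hi0 hi, neg_zero]
  have hu0 : u 0 = ((1 - ‖a‖ ^ 2 : ℝ) : ℂ)⁻¹ := by
    simp only [u, conj_mul', a]; push_cast; rfl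
  have hcoef : iteratedDeriv k (mobius a ∘ f) 0
      = -iteratedDeriv k f 0 * ((1 - ‖a‖ ^ 2 : ℝ) : ℂ)⁻¹ := by
    rw [hΦ, iteratedDeriv_mul_of_forall_lt_eq_zero
      (hcd (fun z => a - f z) ((differentiableOn_const a).sub hd))
      (hcd u hud) hlow, iteratedDeriv_const_sub hk, iteratedDeriv_neg, hu0]
  have hcauchy := Complex.norm_iteratedDeriv_le_of_forall_mem_ball_norm_le k one_pos
    ((differentiableOn_mobius ha).comp hd hf)
    (fun z hz => (norm_mobius_lt_one ha (mem_ball_zero_iff.1 (hf hz))).le)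
  rw [hcoef, norm_mul, norm_neg, norm_inv, norm_real, Real.norm_of_nonneg hA.le, one_pow, div_one,
    mul_one, ← div_eq_mul_inv, div_le_iff₀ hA] at hcauchy
  exact hcauchy

noncomputable def rootAverage (f : ℂ → ℂ) (ω : ℂ) (k : ℕ) (z : ℂ) : ℂ :=
  (k : ℂ)⁻¹ * ∑ j ∈ Finset.range k, f (ω ^ j * z)

section rootAverage

variable {f : ℂ → ℂ} {ω : ℂ} {k : ℕ}

lemma rootAverage_zero (hk : k ≠ 0) : rootAverage f ω k 0 = f 0 := by
  simp [rootAverage, hk]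

lemma differentiableOn_rootAverage (hd : DifferentiableOn ℂ f (ball 0 1)) (hω : ‖ω‖ = 1) :
    DifferentiableOn ℂ (rootAverage f ω k) (ball 0 1) := by
  refine (DifferentiableOn.fun_sum fun j _ => ?_).const_mul _
  exact hd.comp (differentiableOn_id.const_mul _)
    (mapsTo_const_mul_ball (by rw [norm_pow, hω, one_pow]) 1)

lemma mapsTo_rootAverage (hf : MapsTo f (ball 0 1) (ball 0 1)) (hω : ‖ω‖ = 1) (hk : k ≠ 0) :
    MapsTo (rootAverage f ω k) (ball 0 1) (ball 0 1) := by
  intro z hz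
  have hmem : ∀ j ∈ Finset.range k, f (ω ^ j * z) ∈ ball (0 : ℂ) 1 := fun j _ =>
    hf (mapsTo_const_mul_ball (by rw [norm_pow, hω, one_pow]) 1 hz)
  have := (convex_ball (0 : ℂ) 1).sum_mem (w := fun _ => (k : ℝ)⁻¹) (fun _ _ => by positivity)
    (by simp [hk]) hmem
  simpa [rootAverage, Finset.mul_sum, Complex.real_smul] using this

lemma iteratedDeriv_rootAverage_zero (hd : DifferentiableOn ℂ f (ball 0 1))
    (hω : IsPrimitiveRoot ω k) (hk : k ≠ 0) (n : ℕ) :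
    iteratedDeriv n (rootAverage f ω k) 0 = if k ∣ n then iteratedDeriv n f 0 else 0 := by
  have hω1 : ∀ j, ‖ω ^ j‖ ≤ 1 := fun j => by rw [norm_pow, hω.norm'_eq_one hk, one_pow]
  have hcd : ∀ j ∈ Finset.range k, ContDiffAt ℂ n (fun z => f (ω ^ j * z)) 0 := fun j _ =>
    ((hd.comp (differentiableOn_id.const_mul _) (mapsTo_const_mul_ball (hω1 j) 1)).contDiffOn
      isOpen_ball).contDiffAt (isOpen_ball.mem_nhds (mem_ball_self one_pos))
  have hsum : iteratedDeriv n (rootAverage f ω k) 0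
      = (k : ℂ)⁻¹ * (∑ j ∈ Finset.range k, ω ^ (j * n)) * iteratedDeriv n f 0 := by
    unfold rootAverage
    rw [iteratedDeriv_const_mul_field, iteratedDeriv_fun_sum hcd, mul_assoc, Finset.sum_mul]
    congr 1
    refine Finset.sum_congr rfl fun j _ => ?_
    rw [iteratedDeriv_comp_const_mul_zero one_pos hd (hω1 j), smul_eq_mul, pow_mul]
  rw [hsum, hω.sum_pow_mul_eq_ite]
  split_ifs <;> simp [hk]

end rootAverage

theorem norm_iteratedDeriv_le_factorial_mul {f : ℂ → ℂ}
    (hd : DifferentiableOn ℂ f (ball 0 1)) (hf : MapsTo f (ball 0 1) (ball 0 1)) {k : ℕ}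
    (hk : 0 < k) : ‖iteratedDeriv k f 0‖ ≤ k ! * (1 - ‖f 0‖ ^ 2) := by
  have hω := Complex.isPrimitiveRoot_exp k hk.ne'
  have hω1 := hω.norm'_eq_one hk.ne'
  have := norm_iteratedDeriv_le_of_iteratedDeriv_eq_zero (differentiableOn_rootAverage hd hω1)
    (mapsTo_rootAverage hf hω1 hk.ne') hk fun i hi0 hik => by
      rw [iteratedDeriv_rootAverage_zero hd hω hk.ne', if_neg (Nat.not_dvd_of_pos_of_lt hi0 hik)]
  rwa [iteratedDeriv_rootAverage_zero hd hω hk.ne', if_pos dvd_rfl, rootAverage_zero hk.ne']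
    at this

section SchwarzPick

variable {f : ℂ → ℂ}

theorem norm_apply_mul_le (hd : DifferentiableOn ℂ f (ball 0 1))
    (hf : MapsTo f (ball 0 1) (ball 0 1)) {w : ℂ} (hw : w ∈ ball 0 1) :
    ‖f w‖ * (1 + ‖f 0‖ * ‖w‖) ≤ ‖f 0‖ + ‖w‖ := by
  have ha : ‖f 0‖ < 1 := mem_ball_zero_iff.1 (hf (mem_ball_self one_pos))
  have hb : ‖f w‖ < 1 := mem_ball_zero_iff.1 (hf hw)
  have hschwarz : ‖mobius (f 0) (f w)‖ ≤ ‖w‖ :=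
    Complex.norm_le_norm_of_mapsTo_ball ((differentiableOn_mobius ha).comp hd hf)
      (((mapsTo_mobius ha).comp hf).mono_right ball_subset_closedBall) (by simp)
      (mem_ball_zero_iff.1 hw)
  have := (le_abs_self _).trans (abs_norm_sub_norm_le_norm_mobius_mul ha hb)
  nlinarith [mul_le_mul_of_nonneg_right hschwarz
    (by nlinarith [norm_nonneg (f 0), norm_nonneg (f w)] : 0 ≤ 1 - ‖f 0‖ * ‖f w‖)]

theorem norm_deriv_mul_le (hd : DifferentiableOn ℂ f (ball 0 1))
    (hf : MapsTo f (ball 0 1) (ball 0 1)) {w : ℂ} (hw : w ∈ ball 0 1) :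
    ‖deriv f w‖ * (1 - ‖w‖ ^ 2) ≤ 1 - ‖f w‖ ^ 2 := by
  have hw1 : ‖w‖ < 1 := mem_ball_zero_iff.1 hw
  have hfw : HasDerivAt f (deriv f w) (mobius w 0) := by
    rw [mobius_zero_right]
    exact (hd.differentiableAt (isOpen_ball.mem_nhds hw)).hasDerivAt
  have := norm_iteratedDeriv_le_factorial_mul (hd.comp (differentiableOn_mobius hw1)
    (mapsTo_mobius hw1)) (hf.comp (mapsTo_mobius hw1)) one_pos
  rwa [iteratedDeriv_one, (hfw.comp 0 (hasDerivAt_mobius_zero w)).deriv, norm_mul, norm_real,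
    Real.norm_of_nonpos (by nlinarith [norm_nonneg w]), neg_sub, Nat.factorial_one, Nat.cast_one,
    one_mul, Function.comp_apply, mobius_zero_right] at this

lemma tsum_norm_iteratedDeriv_div_factorial_mul_pow_le (hd : DifferentiableOn ℂ f (ball 0 1))
    (hf : MapsTo f (ball 0 1) (ball 0 1)) {r : ℝ} (hr0 : 0 ≤ r) (hr1 : r < 1) {N : ℕ} (hN : 0 < N) :
    ∑' k : ℕ, ‖iteratedDeriv (k + N) f 0 / ((k + N)! : ℂ)‖ * r ^ (k + N)
      ≤ (1 - ‖f 0‖ ^ 2) * r ^ N / (1 - r) := by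
  have hgeom : HasSum (fun k : ℕ => (1 - ‖f 0‖ ^ 2) * r ^ (k + N))
      ((1 - ‖f 0‖ ^ 2) * r ^ N / (1 - r)) := by
    have := ((hasSum_geometric_of_lt_one hr0 hr1).mul_left ((1 - ‖f 0‖ ^ 2) * r ^ N))
    simpa [pow_add, div_eq_mul_inv, mul_assoc, mul_comm, mul_left_comm] using this
  have hle : ∀ k : ℕ, ‖iteratedDeriv (k + N) f 0 / ((k + N)! : ℂ)‖ * r ^ (k + N)
      ≤ (1 - ‖f 0‖ ^ 2) * r ^ (k + N) := fun k => by
    refine mul_le_mul_of_nonneg_right ?_ (by positivity)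
    rw [norm_div, norm_natCast, div_le_iff₀ (by positivity), mul_comm]
    exact norm_iteratedDeriv_le_factorial_mul hd hf (by omega)
  exact hasSum_le hle (Summable.of_nonneg_of_le (fun k => by positivity) hle
    hgeom.summable).hasSum hgeom

end SchwarzPick

lemma add_mul_le_of_schwarzPick_bounds {A ρ r t d : ℝ} (hA0 : 0 ≤ A) (hA1 : A < 1) (hρ0 : 0 ≤ ρ)
    (hρ1 : ρ < 1) (hr0 : 0 ≤ r) (h2r : 2 * r ≤ 1 - ρ ^ 2)
    (ht : t * (1 + A * ρ) ≤ A + ρ) (hd : d * (1 - ρ ^ 2) ≤ 1 - t ^ 2) :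
    t + r * d ≤ (A + ρ) / (1 + A * ρ) + r * (1 - A ^ 2) / (1 + A * ρ) ^ 2 := by
  have hAρ : 0 < 1 + A * ρ := by positivity
  have hρ2 : 0 < 1 - ρ ^ 2 := by nlinarith
  set T := (A + ρ) / (1 + A * ρ) with hT
  have htT : t ≤ T := (le_div_iff₀ hAρ).2 ht
  have hT1 : T ≤ 1 := (div_le_one hAρ).2 (by nlinarith)
  -- `s ↦ s (1 - ρ²) + r (1 - s²)` is increasing on `[0, 1]` because `2 r ≤ 1 - ρ²`
  have hmono : (t + r * d) * (1 - ρ ^ 2) ≤ T * (1 - ρ ^ 2) + r * (1 - T ^ 2) := by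
    nlinarith [mul_le_mul_of_nonneg_left hd hr0, mul_nonneg (sub_nonneg.2 htT)
      (by nlinarith : 0 ≤ 1 - ρ ^ 2 - r * (T + t))]
  have hT2 : 1 - T ^ 2 = (1 - A ^ 2) * (1 - ρ ^ 2) / (1 + A * ρ) ^ 2 := by
    rw [hT]; field_simp; ring
  have hrhs : T * (1 - ρ ^ 2) + r * (1 - T ^ 2)
      = (T + r * (1 - A ^ 2) / (1 + A * ρ) ^ 2) * (1 - ρ ^ 2) := by
    rw [hT2]; ring
  exact le_of_mul_le_mul_right (hmono.trans_eq hrhs) hρ2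

lemma mobius_bound_add_geometric_le_one {A ρ r : ℝ} (hA0 : 0 ≤ A) (hA1 : A < 1) (hρ0 : 0 ≤ ρ)
    (hρr : ρ ≤ r) (hr1 : r < 1)
    (hroot : 3 * r - 1 + ρ * (2 * r ^ 2 * (ρ + 2) + ρ * (1 - r)) ≤ 0) :
    (A + ρ) / (1 + A * ρ) + r * (1 - A ^ 2) / (1 + A * ρ) ^ 2 + (1 - A ^ 2) * r ^ 2 / (1 - r)
      ≤ 1 := by
  have hAρ : 0 < 1 + A * ρ := by positivity
  have hr : 0 < 1 - r := by linarith
  set B := (1 + A * ρ) * (1 - ρ) * (1 - r) - (1 + A) * r * (1 - r)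
    - (1 + A) * r ^ 2 * (1 + A * ρ) ^ 2
  -- `B ≥ B|_{A=1} = -(3 r - 1 + ρ (2 r² (ρ + 2) + ρ (1 - r)))`, using `A ≤ 1` and `ρ ≤ r`
  have hB : 0 ≤ B := by
    have hgap : (1 + A) * (1 + A * ρ) ^ 2 ≤ 2 * (1 + ρ) ^ 2 :=
      mul_le_mul (by linarith) (pow_le_pow_left₀ hAρ.le (by nlinarith) 2) (by positivity)
        (by norm_num)
    nlinarith [mul_nonneg (mul_nonneg (sub_nonneg.2 hA1.le) hr.le)
      (by nlinarith : 0 ≤ r - ρ + ρ ^ 2), mul_le_mul_of_nonneg_left hgap (sq_nonneg r)]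
  have key : (A + ρ) / (1 + A * ρ) + r * (1 - A ^ 2) / (1 + A * ρ) ^ 2
      + (1 - A ^ 2) * r ^ 2 / (1 - r) = 1 - (1 - A) * B / ((1 + A * ρ) ^ 2 * (1 - r)) := by
    field_simp
    ring
  rw [key, sub_le_self_iff]
  exact div_nonneg (mul_nonneg (by linarith) hB) (by positivity)

/-- Theorem 4 (sufficiency): improved Bohr inequality with `|f(zᵐ)| + |z||f'(zᵐ)|`. -/
theorem bohr_improved_three (f : ℂ → ℂ)
    (hd : DifferentiableOn ℂ f (Metric.ball (0 : ℂ) 1))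
    (hb : ∀ z : ℂ, ‖z‖ < 1 → ‖f z‖ < 1)
    (m : ℕ) (hm : 1 ≤ m) (r : ℝ) (hr : r ∈ Set.Ico (0 : ℝ) 1)
    (hroot : 3 * r - 1 + r ^ m * (2 * r ^ 2 * (r ^ m + 2) + r ^ m * (1 - r)) ≤ 0) :
    ∀ z : ℂ, ‖z‖ = r →
      ‖f (z ^ m)‖ + ‖z‖ * ‖deriv f (z ^ m)‖ +
        ∑' k : ℕ, ‖iteratedDeriv (k + 2) f 0 / (Nat.factorial (k + 2) : ℂ)‖ * r ^ (k + 2)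
        ≤ 1 := by
  intro z hz
  obtain ⟨hr0, hr1⟩ := hr
  have hf : MapsTo f (ball 0 1) (ball 0 1) := fun w hw =>
    mem_ball_zero_iff.2 (hb w (mem_ball_zero_iff.1 hw))
  have hA : ‖f 0‖ < 1 := hb 0 (by simp)
  have hρr : r ^ m ≤ r := pow_le_of_le_one hr0 hr1.le (by omega)
  have hρ1 : r ^ m < 1 := hρr.trans_lt hr1
  have hρ0 : 0 ≤ r ^ m := by positivity
  have hw : z ^ m ∈ ball (0 : ℂ) 1 := by rwa [mem_ball_zero_iff, norm_pow, hz]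
  have hval := norm_apply_mul_le hd hf hw
  have hder := norm_deriv_mul_le hd hf hw
  rw [norm_pow, hz] at hval hder
  have h2r : 2 * r ≤ 1 - (r ^ m) ^ 2 := by
    nlinarith [mul_nonneg (mul_nonneg hρ0 (sq_nonneg r)) (by positivity : (0 : ℝ) ≤ r ^ m + 2),
      mul_nonneg hr0 (by nlinarith : 0 ≤ 1 - (r ^ m) ^ 2)]
  rw [hz]
  calc _ ≤ (‖f 0‖ + r ^ m) / (1 + ‖f 0‖ * r ^ m) + r * (1 - ‖f 0‖ ^ 2) / (1 + ‖f 0‖ * r ^ m) ^ 2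
          + (1 - ‖f 0‖ ^ 2) * r ^ 2 / (1 - r) :=
        add_le_add (add_mul_le_of_schwarzPick_bounds (norm_nonneg _) hA hρ0 hρ1 hr0 h2r hval hder)
          (tsum_norm_iteratedDeriv_div_factorial_mul_pow_le hd hf hr0 hr1 two_pos)
    _ ≤ 1 := mobius_bound_add_geometric_le_one (norm_nonneg _) hA hρ0 hρr hr1 hroot
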